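/- arXiv:2510.12538 — 8 statements merged into one kernel-verified Lean document; each statement's English description precedes it below -/
import Mathlib

section
/- Let X be a real smooth Banach space, A : X ⇉ X* an α-monotone operator, γ > 0, and let J_{γA} = (J + γA)⁻¹ ∘ J be the resolvent. Then for all (x,a), (y,b) in the graph of J_{γA}, ⟨Jx − Jy, a − b⟩ ≥ (1 + γα)⟨a − b, Ja − Jb⟩. -/
/-- Resolvent inequality for α-monotone operators:
for (x,a),(y,b) in gra J_{γA}, ⟨Jx − Jy, a − b⟩ ≥ (1+γα)⟨a − b, Ja − Jb⟩. -/
theorem resolvent_inequality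
    {X : Type*} [NormedAddCommGroup X] [NormedSpace ℝ X] [CompleteSpace X]
    (J : X → X →L[ℝ] ℝ)
    (hJ : ∀ x : X, J x x = ‖x‖ ^ 2 ∧ ‖J x‖ = ‖x‖)
    (A : X → Set (X →L[ℝ] ℝ)) (α : ℝ)
    (hA : ∀ x y : X, ∀ u v : X →L[ℝ] ℝ, u ∈ A x → v ∈ A y →
      α * (J x (x - y) - J y (x - y)) ≤ u (x - y) - v (x - y))
    (γ : ℝ) (hγ : 0 < γ) :
    ∀ x y a b : X,
      (∃ u ∈ A a, J x = J a + γ • u) →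
      (∃ v ∈ A b, J y = J b + γ • v) →
      (1 + γ * α) * (J a (a - b) - J b (a - b)) ≤ J x (a - b) - J y (a - b) := by
  rintro x y a b ⟨u, hu, hx⟩ ⟨v, hv, hy⟩
  have h := hA a b u v hu hv
  have hx' : J x (a - b) = J a (a - b) + γ * u (a - b) := by
    rw [hx]; simp
  have hy' : J y (a - b) = J b (a - b) + γ * v (a - b) := by
    rw [hy]; simp
  nlinarith [mul_le_mul_of_nonneg_left h hγ.le]
end

section
/- Let X be a real smooth, strictly convex, reflexive Banach space, A : X ⇉ X* an α-monotone operator, and γ > 0 with 1 + γα > 0. Then the resolvent J_{γA} = (J + γA)⁻¹J is single-valued, i.e. if Jx ∈ Ja + γAa and Jx ∈ Jb + γAb then a = b. -/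
/-- Single-valuedness of the resolvent of an α-monotone operator when 1 + γα > 0,
in a smooth, strictly convex, reflexive Banach space (where J is strictly monotone). -/
theorem resolvent_single_valued
    {X : Type*} [NormedAddCommGroup X] [NormedSpace ℝ X] [CompleteSpace X]
    (J : X → X →L[ℝ] ℝ)
    (hJ : ∀ x : X, J x x = ‖x‖ ^ 2 ∧ ‖J x‖ = ‖x‖)
    -- strict monotonicity of J (valid in strictly convex spaces):
    (hJstrict : ∀ x y : X, J x (x - y) - J y (x - y) = 0 → x = y)
    (A : X → Set (X →L[ℝ] ℝ)) (α : ℝ)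
    (hA : ∀ x y : X, ∀ u v : X →L[ℝ] ℝ, u ∈ A x → v ∈ A y →
      α * (J x (x - y) - J y (x - y)) ≤ u (x - y) - v (x - y))
    (γ : ℝ) (hγ : 0 < γ) (hγα : 0 < 1 + γ * α) :
    ∀ x a b : X,
      (∃ u ∈ A a, J x = J a + γ • u) →
      (∃ v ∈ A b, J x = J b + γ • v) →
      a = b := by
  rintro x a b ⟨u, hu, hxu⟩ ⟨v, hv, hxv⟩
  set t : ℝ := J a (a - b) - J b (a - b) with ht
  -- t ≥ 0 : monotonicity of J
  have htnn : 0 ≤ t := by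
    have h1 : J a (a - b) ≥ ‖a‖ ^ 2 - ‖a‖ * ‖b‖ := by
      have := (J a).le_opNorm b
      rw [(hJ a).2] at this
      have : J a b ≤ ‖a‖ * ‖b‖ := le_trans (le_abs_self _) this
      have h2 : J a (a - b) = J a a - J a b := by rw [map_sub]
      rw [h2, (hJ a).1]; linarith
    have h2 : J b (a - b) ≤ ‖b‖ * ‖a‖ - ‖b‖ ^ 2 := by
      have := (J b).le_opNorm a
      rw [(hJ b).2] at this
      have h3 : (J b a) ≤ ‖b‖ * ‖a‖ := le_trans (le_abs_self _) this
      have h4 : J b (a - b) = J b a - J b b := by rw [map_sub]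
      rw [h4, (hJ b).1]; linarith
    nlinarith [sq_nonneg (‖a‖ - ‖b‖)]
  -- from the two resolvent equations: γ • u - γ • v = J b - J a
  have key : γ * (u (a - b) - v (a - b)) = -t := by
    have h : J a + γ • u = J b + γ • v := by rw [← hxu, ← hxv]
    have h2 := congrArg (fun f : X →L[ℝ] ℝ => f (a - b)) h
    simp only [ContinuousLinearMap.add_apply, ContinuousLinearMap.smul_apply,
      smul_eq_mul] at h2
    simp only [ht]; linarith
  have hmon := hA a b u v hu hv
  rw [← ht] at hmon
  -- γ α t ≤ γ (u - v)(a-b) = -t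
  have h5 : γ * (α * t) ≤ γ * (u (a - b) - v (a - b)) :=
    mul_le_mul_of_nonneg_left hmon hγ.le
  rw [key] at h5
  have ht0 : t = 0 := by nlinarith
  exact hJstrict a b ht0
end

section
/- Let X be a real smooth Banach space in which the function t ↦ ‖y + t(x−y)‖² has a derivative at t = 0 equal to 2⟨x − y, Jy⟩ for all x, y. If there exists K > 0 such that φ(x,y) ≤ K‖x − y‖² for all x, y ∈ X (where φ(x,y) = ‖x‖² − 2⟨x, Jy⟩ + ‖y‖²), then X satisfies the 2-uniform smoothness inequality: there exists K' ≥ 1 with (‖u+v‖² + ‖u−v‖²)/2 ≤ ‖u‖² + ‖K'v‖² for all u, v ∈ X. -/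
/-- If φ(x,y) ≤ K‖x−y‖² for all x,y in a smooth Banach space (with the duality
mapping arising as the derivative of the squared norm), then X satisfies the
2-uniform smoothness parallelogram-type inequality. -/
theorem phi_upper_bound_implies_two_uniformly_smooth
    {X : Type*} [NormedAddCommGroup X] [NormedSpace ℝ X] [CompleteSpace X]
    (J : X → X →L[ℝ] ℝ)
    (hJ : ∀ x : X, J x x = ‖x‖ ^ 2 ∧ ‖J x‖ = ‖x‖)
    (hderiv : ∀ x y : X,
      HasDerivAt (fun t : ℝ => ‖y + t • (x - y)‖ ^ 2) (2 * J y (x - y)) 0)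
    (φ : X → X → ℝ)
    (hφ : ∀ x y : X, φ x y = ‖x‖ ^ 2 - 2 * J y x + ‖y‖ ^ 2)
    (hbound : ∃ K : ℝ, 0 < K ∧ ∀ x y : X, φ x y ≤ K * ‖x - y‖ ^ 2) :
    ∃ K' : ℝ, 1 ≤ K' ∧ ∀ u v : X,
      (‖u + v‖ ^ 2 + ‖u - v‖ ^ 2) / 2 ≤ ‖u‖ ^ 2 + ‖K' • v‖ ^ 2 := by
  obtain ⟨K, hK, hb⟩ := hbound
  refine ⟨max 1 (Real.sqrt K), le_max_left _ _, fun u v => ?_⟩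
  have h1 := hb (u + v) u
  have h2 := hb (u - v) u
  rw [hφ] at h1 h2
  have e1 : u + v - u = v := by abel
  have e2 : u - v - u = -v := by abel
  rw [e1] at h1
  rw [e2, norm_neg] at h2
  have hJu : J u u = ‖u‖ ^ 2 := (hJ u).1
  have hadd : J u (u + v) = J u u + J u v := map_add _ _ _
  have hsub : J u (u - v) = J u u - J u v := map_sub _ _ _
  have hK1 : (1 : ℝ) ≤ max 1 (Real.sqrt K) := le_max_left _ _
  have hKs : Real.sqrt K ≤ max 1 (Real.sqrt K) := le_max_right _ _
  have hsq : K ≤ (max 1 (Real.sqrt K)) ^ 2 := by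
    have h0 : (0 : ℝ) ≤ Real.sqrt K := Real.sqrt_nonneg K
    nlinarith [Real.sq_sqrt hK.le]
  have hnorm : ‖(max 1 (Real.sqrt K)) • v‖ ^ 2 = (max 1 (Real.sqrt K)) ^ 2 * ‖v‖ ^ 2 := by
    rw [norm_smul, Real.norm_eq_abs, abs_of_pos (lt_of_lt_of_le one_pos hK1), mul_pow]
  rw [hnorm]
  nlinarith [norm_nonneg v, sq_nonneg (‖v‖)]
end

section
/- Let X be a real Banach space satisfying the 2-uniform smoothness inequality: there exists K ≥ 1 with (‖x+y‖² + ‖x−y‖²)/2 ≤ ‖x‖² + ‖Ky‖² for all x, y. If moreover X is smooth, then φ(x,y) ≤ K²‖x − y‖² for all x, y ∈ X, where φ(x,y) = ‖x‖² − 2⟨x, Jy⟩ + ‖y‖². -/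
/-- In a smooth Banach space satisfying the 2-uniform smoothness inequality with
constant K ≥ 1, one has φ(x,y) ≤ K²‖x−y‖². -/
theorem two_uniformly_smooth_implies_phi_upper_bound
    {X : Type*} [NormedAddCommGroup X] [NormedSpace ℝ X] [CompleteSpace X]
    (J : X → X →L[ℝ] ℝ)
    (hJ : ∀ x : X, J x x = ‖x‖ ^ 2 ∧ ‖J x‖ = ‖x‖)
    (hderiv : ∀ x y : X,
      HasDerivAt (fun t : ℝ => ‖y + t • (x - y)‖ ^ 2) (2 * J y (x - y)) 0)
    (φ : X → X → ℝ)
    (hφ : ∀ x y : X, φ x y = ‖x‖ ^ 2 - 2 * J y x + ‖y‖ ^ 2)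
    (K : ℝ) (hK : 1 ≤ K)
    (hsmooth : ∀ x y : X,
      (‖x + y‖ ^ 2 + ‖x - y‖ ^ 2) / 2 ≤ ‖x‖ ^ 2 + ‖K • y‖ ^ 2) :
    ∀ x y : X, φ x y ≤ K ^ 2 * ‖x - y‖ ^ 2 := by
  intro x y
  set v : X := x - y with hv
  set c : ℝ := ‖x - y‖ ^ 2 with hc
  set f : ℝ → ℝ := fun t : ℝ => ‖y + t • v‖ ^ 2 with hf
  have hc0 : 0 ≤ c := by positivity
  have hK0 : (0:ℝ) ≤ K := le_trans zero_le_one hK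
  -- key second-difference inequality
  have key : ∀ u : ℝ, f (2 * u) + f 0 ≤ 2 * f u + 2 * (K ^ 2 * c) * u ^ 2 := by
    intro u
    have h := hsmooth (y + u • v) (u • v)
    have e1 : y + u • v + u • v = y + (2 * u) • v := by
      rw [two_mul, add_smul]; abel
    have e2 : y + u • v - u • v = y + (0:ℝ) • v := by simp
    have e3 : ‖K • (u • v)‖ ^ 2 = K ^ 2 * c * u ^ 2 := by
      rw [norm_smul, norm_smul, Real.norm_eq_abs, Real.norm_eq_abs, abs_of_nonneg hK0,
        hc, hv, mul_pow, mul_pow, sq_abs]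
      ring
    rw [e1, e2, e3] at h
    simp only [hf]
    linarith
  -- dyadic slopes
  set a : ℕ → ℝ := fun n => (f ((1/2)^n) - f 0) * (2:ℝ)^n with ha
  have hstep : ∀ n : ℕ, a n ≤ a (n+1) + K^2 * c * (1/2)^(n+1) := by
    intro n
    have h := key ((1/2)^(n+1) : ℝ)
    have e : (2:ℝ) * (1/2)^(n+1) = (1/2)^n := by
      rw [pow_succ]; ring
    rw [e] at h
    have hpow : ((1/2:ℝ))^(n+1) * (2:ℝ)^(n+1) = 1 := by
      rw [← mul_pow]; norm_num
    have h2n : (2:ℝ)^n * 2 = 2^(n+1) := by rw [pow_succ]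
    have hpow2 : ((1/2:ℝ)^(n+1)) ^ 2 * (2:ℝ)^n * 2 = (1/2)^(n+1) := by
      calc ((1/2:ℝ)^(n+1)) ^ 2 * (2:ℝ)^n * 2
          = (1/2)^(n+1) * ((1/2)^(n+1) * ((2:ℝ)^n * 2)) := by ring
        _ = (1/2)^(n+1) * ((1/2)^(n+1) * (2:ℝ)^(n+1)) := by rw [h2n]
        _ = (1/2)^(n+1) * 1 := by rw [hpow]
        _ = (1/2)^(n+1) := mul_one _
    have h2 := mul_le_mul_of_nonneg_right h
      (le_of_lt (pow_pos (by norm_num : (0:ℝ) < 2) n))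
    have hA : 2 * (K^2*c) * ((1/2:ℝ)^(n+1))^2 * 2^n = K^2 * c * (1/2)^(n+1) := by
      conv_rhs => rw [← hpow2]
      ring
    have hpw : (2:ℝ)^(n+1) = 2 * (2:ℝ)^n := by rw [pow_succ]; ring
    simp only [ha]
    rw [hpw]
    linarith [h2, hA]
  have hbound : ∀ n : ℕ, a 0 ≤ a n + K^2 * c * (1 - (1/2)^n) := by
    intro n
    induction n with
    | zero => simp
    | succ n ih =>
      have h1 := hstep n
      have h2 : ((1/2:ℝ))^(n+1) = (1/2)^n * (1/2) := by rw [pow_succ]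
      have h3 : K^2 * c * (1/2:ℝ)^(n+1) = K^2 * c * (1/2)^n * (1/2) := by
        rw [h2]; ring
      linarith
  have hbound' : ∀ n : ℕ, a 0 ≤ a n + K^2 * c := by
    intro n
    have h1 : (0:ℝ) ≤ K^2 * c := by positivity
    have h2 : (0:ℝ) ≤ ((1/2:ℝ))^n := by positivity
    have := hbound n
    nlinarith
  -- a n tends to the derivative
  have hd : HasDerivAt f (2 * J y v) 0 := hderiv x y
  have hslope : Filter.Tendsto (slope f 0) (nhdsWithin 0 {(0:ℝ)}ᶜ) (nhds (2 * J y v)) :=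
    hasDerivAt_iff_tendsto_slope.mp hd
  have hr : Filter.Tendsto (fun n : ℕ => ((1/2:ℝ))^n) Filter.atTop
      (nhdsWithin 0 {(0:ℝ)}ᶜ) := by
    apply tendsto_nhdsWithin_of_tendsto_nhds_of_eventually_within
    · exact tendsto_pow_atTop_nhds_zero_of_lt_one (by norm_num) (by norm_num)
    · exact Filter.Eventually.of_forall (fun n => by
        simp only [Set.mem_compl_iff, Set.mem_singleton_iff]
        positivity)
  have haeq : ∀ n : ℕ, a n = slope f 0 ((1/2)^n) := by
    intro n
    have hinv : (((1/2:ℝ))^n)⁻¹ = 2^n := by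
      rw [← inv_pow]; norm_num
    simp only [ha]
    have hne : ((1/2:ℝ))^n ≠ 0 := by positivity
    have hone : (2:ℝ)^n * (1/2)^n = 1 := by rw [← mul_pow]; norm_num
    rw [slope_def_field, sub_zero, eq_div_iff hne, mul_assoc, hone, mul_one]
  have hta : Filter.Tendsto a Filter.atTop (nhds (2 * J y v)) :=
    Filter.Tendsto.congr (fun n => (haeq n).symm) (hslope.comp hr)
  have hfinal : a 0 ≤ 2 * J y v + K^2 * c := by
    refine ge_of_tendsto (hta.add_const (K^2 * c)) ?_
    exact Filter.Eventually.of_forall hbound'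
  -- unwrap
  have hf1 : f 1 = ‖x‖ ^ 2 := by
    simp only [hf, one_smul, hv]
    congr 2
    abel
  have hf0 : f 0 = ‖y‖ ^ 2 := by simp [hf]
  have ha0 : a 0 = ‖x‖ ^ 2 - ‖y‖ ^ 2 := by
    simp [ha, hf1, hf0]
  have hJx : J y x = J y v + ‖y‖ ^ 2 := by
    have hxy : x = v + y := by rw [hv]; abel
    rw [hxy, map_add, (hJ y).1]
  rw [hφ, hJx]
  rw [ha0] at hfinal
  linarith
end

section
/- Let X be a real smooth Banach space with duality mapping J, let A be a classical α-strongly monotone operator (α > 0): ⟨x − y, u − v⟩ ≥ α‖x−y‖² on gra A, with zero x* ∈ A⁻¹(0). For each n ≥ 1 let αₙ > 0 with αₙ → 0, set Aₙ = A + αₙ J, and suppose xₙ satisfies 0 ∈ Aₙ xₙ. Then ‖xₙ‖ ≤ ‖x*‖ for all n and ‖xₙ − x*‖ ≤ (αₙ/α)‖x*‖; in particular xₙ → x* strongly. -/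
open Filter Topology

/-- Tikhonov-type regularization: zeros of Aₙ = A + αₙJ are bounded by ‖x*‖ and
converge strongly to the zero x* of the classically α-strongly monotone A, with
rate ‖xₙ − x*‖ ≤ (αₙ/α)‖x*‖. -/
theorem regularized_zeros_converge
    {X : Type*} [NormedAddCommGroup X] [NormedSpace ℝ X] [CompleteSpace X]
    (J : X → X →L[ℝ] ℝ)
    (hJ : ∀ x : X, J x x = ‖x‖ ^ 2 ∧ ‖J x‖ = ‖x‖)
    (A : X → Set (X →L[ℝ] ℝ)) (α : ℝ) (hα : 0 < α)
    (hA : ∀ x y : X, ∀ u v : X →L[ℝ] ℝ, u ∈ A x → v ∈ A y →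
      α * ‖x - y‖ ^ 2 ≤ u (x - y) - v (x - y))
    (xstar : X) (hxstar : 0 ∈ A xstar)
    (a : ℕ → ℝ) (ha : ∀ n, 0 < a n) (ha0 : Tendsto a atTop (𝓝 0))
    (x : ℕ → X)
    (hx : ∀ n, ∃ u ∈ A (x n), u + a n • J (x n) = 0) :
    (∀ n, ‖x n‖ ≤ ‖xstar‖) ∧
    (∀ n, ‖x n - xstar‖ ≤ (a n / α) * ‖xstar‖) ∧
    Tendsto x atTop (𝓝 xstar) := by
  -- key inequality for each n
  have key : ∀ n, α * ‖x n - xstar‖ ^ 2 + a n * ‖x n‖ ^ 2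
      ≤ a n * (‖x n‖ * ‖xstar‖) := by
    intro n
    obtain ⟨u, hu, heq⟩ := hx n
    have hmono := hA (x n) xstar u 0 hu hxstar
    simp only [ContinuousLinearMap.zero_apply, sub_zero] at hmono
    have hu' : u (x n - xstar) = -(a n * (J (x n)) (x n - xstar)) := by
      have : u = -(a n • J (x n)) := by
        have := heq
        linear_combination (norm := module) this
      rw [this]; simp
    have hJx := (hJ (x n)).1
    have hJnorm := (hJ (x n)).2
    have hJstar : (J (x n)) xstar ≤ ‖x n‖ * ‖xstar‖ := by
      calc (J (x n)) xstar ≤ ‖(J (x n)) xstar‖ := le_abs_self _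
        _ ≤ ‖J (x n)‖ * ‖xstar‖ := (J (x n)).le_opNorm _
        _ = ‖x n‖ * ‖xstar‖ := by rw [hJnorm]
    have hJd : ‖x n‖ ^ 2 - ‖x n‖ * ‖xstar‖ ≤ (J (x n)) (x n - xstar) := by
      have : (J (x n)) (x n - xstar) = ‖x n‖ ^ 2 - (J (x n)) xstar := by
        rw [map_sub, hJx]
      linarith
    have han := (ha n).le
    nlinarith [hmono, hu', mul_le_mul_of_nonneg_left hJd han]
  have hn1 : ∀ n, ‖x n‖ ≤ ‖xstar‖ := by
    intro n
    rcases eq_or_lt_of_le (norm_nonneg (x n)) with h | h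
    · rw [← h]; exact norm_nonneg _
    · have hk := key n
      have h1 : 0 ≤ α * ‖x n - xstar‖ ^ 2 := by positivity
      have : a n * ‖x n‖ ^ 2 ≤ a n * (‖x n‖ * ‖xstar‖) := by linarith
      have := le_of_mul_le_mul_left this (ha n)
      nlinarith
  have hn2 : ∀ n, ‖x n - xstar‖ ≤ (a n / α) * ‖xstar‖ := by
    intro n
    rcases eq_or_lt_of_le (norm_nonneg (x n - xstar)) with h | h
    · rw [← h]
      have := (ha n).le
      positivity
    · have hk := key n
      have hb : ‖xstar‖ - ‖x n‖ ≤ ‖x n - xstar‖ := by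
        have := abs_norm_sub_norm_le (x n) xstar
        rw [abs_le] at this; linarith
      have h2 : a n * ‖x n‖ ^ 2 = a n * ‖x n‖ * ‖x n‖ := by ring
      have : α * ‖x n - xstar‖ ^ 2 ≤ a n * ‖x n‖ * (‖xstar‖ - ‖x n‖) := by
        nlinarith
      have h3 : α * ‖x n - xstar‖ ^ 2 ≤ a n * ‖xstar‖ * ‖x n - xstar‖ := by
        have hn := hn1 n
        have e1 := mul_le_mul_of_nonneg_left hb (mul_nonneg (ha n).le (norm_nonneg (x n)))
        have e2 := mul_le_mul_of_nonneg_right (mul_le_mul_of_nonneg_left hn (ha n).le) h.le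
        linarith
      have h4 : α * ‖x n - xstar‖ ≤ a n * ‖xstar‖ := by
        nlinarith
      rw [div_mul_eq_mul_div, le_div_iff₀ hα]
      linarith
  refine ⟨hn1, hn2, ?_⟩
  rw [tendsto_iff_norm_sub_tendsto_zero]
  have hlim : Tendsto (fun n => (a n / α) * ‖xstar‖) atTop (𝓝 0) := by
    have := (ha0.div_const α).mul_const ‖xstar‖
    simpa using this
  exact squeeze_zero (fun n => norm_nonneg _) hn2 hlim
end

section
/- Let X be a real smooth Banach space, C ⊆ X nonempty, σ > 1, and T : C → C a σ-firmly nonexpansive type mapping with a fixed point u = Tu. Then for every x ∈ C and n ∈ ℕ, σⁿ φ(u, Tⁿx) ≤ φ(u, x), where φ(x,y) = ‖x‖² − 2⟨x, Jy⟩ + ‖y‖². If in addition there is μ ≥ 1 with (1/μ)‖a − b‖² ≤ φ(a,b) for all a, b (as holds in 2-uniformly convex spaces), then ‖u − Tⁿx‖² ≤ (μ/σⁿ) φ(u,x), so Tⁿx → u strongly with R-linear rate. -/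
/-- For a σ-firmly nonexpansive type mapping (σ > 1) with fixed point u:
σⁿφ(u, Tⁿx) ≤ φ(u,x); and with the 2-uniform convexity estimate,
‖u − Tⁿx‖² ≤ (μ/σⁿ)φ(u,x). -/
theorem sigma_firmly_nonexpansive_iterates
    {X : Type*} [NormedAddCommGroup X] [NormedSpace ℝ X] [CompleteSpace X]
    (J : X → X →L[ℝ] ℝ)
    (hJ : ∀ x : X, J x x = ‖x‖ ^ 2 ∧ ‖J x‖ = ‖x‖)
    (φ : X → X → ℝ)
    (hφ : ∀ x y : X, φ x y = ‖x‖ ^ 2 - 2 * J y x + ‖y‖ ^ 2)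
    (C : Set X) (hC : C.Nonempty) (σ : ℝ) (hσ : 1 < σ)
    (T : X → X) (hTC : ∀ x ∈ C, T x ∈ C)
    (hT : ∀ x ∈ C, ∀ y ∈ C,
      σ * (J (T x) (T x - T y) - J (T y) (T x - T y)) ≤
        J x (T x - T y) - J y (T x - T y))
    (u : X) (hu : u ∈ C) (hufix : T u = u) :
    (∀ x ∈ C, ∀ n : ℕ, σ ^ n * φ u (T^[n] x) ≤ φ u x) ∧
    (∀ μ : ℝ, 1 ≤ μ → (∀ a b : X, (1 / μ) * ‖a - b‖ ^ 2 ≤ φ a b) →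
      ∀ x ∈ C, ∀ n : ℕ, ‖u - T^[n] x‖ ^ 2 ≤ (μ / σ ^ n) * φ u x) := by
  -- φ is nonnegative
  have hφnn : ∀ a b : X, 0 ≤ ‖a‖ ^ 2 - 2 * J b a + ‖b‖ ^ 2 := by
    intro a b
    have h1 := (J b).le_opNorm a
    rw [(hJ b).2, Real.norm_eq_abs] at h1
    have h2 : J b a ≤ ‖b‖ * ‖a‖ := le_trans (le_abs_self _) h1
    nlinarith [sq_nonneg (‖a‖ - ‖b‖)]
  -- key one-step inequality
  have key : ∀ x ∈ C, σ * φ u (T x) ≤ φ u x := by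
    intro x hx
    have h := hT x hx u hu
    rw [hufix] at h
    simp only [map_sub] at h
    rw [(hJ (T x)).1, (hJ u).1] at h
    have n1 := hφnn (T x) x
    have n2 := hφnn (T x) u
    have hσ' : (0:ℝ) ≤ σ - 1 := by linarith
    have hmul := mul_nonneg hσ' n2
    rw [hφ u (T x), hφ u x]
    nlinarith [hmul, n1, h]
  have hσ0 : (0:ℝ) < σ := by linarith
  have mem : ∀ x ∈ C, ∀ n : ℕ, T^[n] x ∈ C := by
    intro x hx n
    induction n with
    | zero => simpa using hx
    | succ n ih => rw [Function.iterate_succ_apply']; exact hTC _ ih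
  have main : ∀ x ∈ C, ∀ n : ℕ, σ ^ n * φ u (T^[n] x) ≤ φ u x := by
    intro x hx n
    induction n with
    | zero => simp
    | succ n ih =>
      rw [Function.iterate_succ_apply', pow_succ]
      have h1 := key _ (mem x hx n)
      calc σ ^ n * σ * φ u (T (T^[n] x))
          = σ ^ n * (σ * φ u (T (T^[n] x))) := by ring
        _ ≤ σ ^ n * φ u (T^[n] x) :=
            mul_le_mul_of_nonneg_left h1 (pow_nonneg hσ0.le n)
        _ ≤ φ u x := ih
  refine ⟨main, fun μ hμ hμφ x hx n => ?_⟩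
  have hμ0 : (0:ℝ) < μ := by linarith
  have h1 := hμφ u (T^[n] x)
  have h2 := main x hx n
  have hσn : (0:ℝ) < σ ^ n := pow_pos hσ0 n
  rw [div_mul_eq_mul_div, le_div_iff₀ hσn]
  have : ‖u - T^[n] x‖ ^ 2 ≤ μ * φ u (T^[n] x) := by
    rw [div_mul_eq_mul_div, div_le_iff₀ hμ0] at h1
    linarith [h1]
  calc ‖u - T^[n] x‖ ^ 2 * σ ^ n ≤ μ * φ u (T^[n] x) * σ ^ n :=
        mul_le_mul_of_nonneg_right this hσn.le
    _ = μ * (σ ^ n * φ u (T^[n] x)) := by ring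
    _ ≤ μ * φ u x := mul_le_mul_of_nonneg_left h2 hμ0.le
end

section
/- Let X be a real smooth, strictly convex, reflexive Banach space with duality mapping J, C ⊆ X a nonempty closed convex set, and T : C → C. If there exists an α-monotone operator A ⊆ X × X* with D(A) ⊆ C ⊆ J⁻¹R(J + A) and Tx = (J + A)⁻¹Jx for all x ∈ C, then T is of (1+α)-firmly nonexpansive type: ⟨Tx − Ty, Jx − Jy⟩ ≥ (1+α)⟨Tx − Ty, JTx − JTy⟩ for all x, y ∈ C. -/
/-- If T is the resolvent of an α-monotone operator A (i.e. Jx − JTx ∈ A(Tx) on C,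
with D(A) ⊆ C), then T is of (1+α)-firmly nonexpansive type. -/
theorem resolvent_is_firmly_nonexpansive_type
    {X : Type*} [NormedAddCommGroup X] [NormedSpace ℝ X] [CompleteSpace X]
    (J : X → X →L[ℝ] ℝ)
    (hJ : ∀ x : X, J x x = ‖x‖ ^ 2 ∧ ‖J x‖ = ‖x‖)
    (C : Set X) (hC : C.Nonempty) (hCclosed : IsClosed C) (hCconv : Convex ℝ C)
    (A : X → Set (X →L[ℝ] ℝ)) (α : ℝ)
    (hA : ∀ x y : X, ∀ u v : X →L[ℝ] ℝ, u ∈ A x → v ∈ A y →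
      α * (J x (x - y) - J y (x - y)) ≤ u (x - y) - v (x - y))
    (hdom : ∀ x : X, (A x).Nonempty → x ∈ C)
    (T : X → X)
    (hT : ∀ x ∈ C, T x ∈ C ∧ J x - J (T x) ∈ A (T x)) :
    ∀ x ∈ C, ∀ y ∈ C,
      (1 + α) * (J (T x) (T x - T y) - J (T y) (T x - T y)) ≤
        J x (T x - T y) - J y (T x - T y) := by
  intro x hx y hy
  have h := hA (T x) (T y) _ _ (hT x hx).2 (hT y hy).2
  simp only [ContinuousLinearMap.sub_apply] at h
  linarith
end

section
/- Let X be a real smooth, strictly convex, reflexive Banach space, C ⊆ X nonempty closed convex, and T : C → C a (1+α)-firmly nonexpansive type mapping. Define A = JT⁻¹ − J (i.e. u* ∈ Ax iff TJ⁻¹(u* + Jx) = x). Then A is α-monotone: ⟨x₁ − x₂, x₁* − x₂*⟩ ≥ α⟨x₁ − x₂, Jx₁ − Jx₂⟩ for all (x₁,x₁*), (x₂,x₂*) ∈ gra A. -/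
/-- If T : C → C is (1+α)-firmly nonexpansive type, then the operator
A = JT⁻¹ − J, whose graph is {(x, Ju − Jx) : u ∈ C, Tu = x}, is α-monotone. -/
theorem inverse_operator_alpha_monotone
    {X : Type*} [NormedAddCommGroup X] [NormedSpace ℝ X] [CompleteSpace X]
    (J : X → X →L[ℝ] ℝ)
    (hJ : ∀ x : X, J x x = ‖x‖ ^ 2 ∧ ‖J x‖ = ‖x‖)
    (C : Set X) (hC : C.Nonempty) (hCclosed : IsClosed C) (hCconv : Convex ℝ C)
    (α : ℝ) (T : X → X) (hTC : ∀ x ∈ C, T x ∈ C)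
    (hT : ∀ x ∈ C, ∀ y ∈ C,
      (1 + α) * (J (T x) (T x - T y) - J (T y) (T x - T y)) ≤
        J x (T x - T y) - J y (T x - T y)) :
    ∀ x₁ x₂ u₁ u₂ : X, u₁ ∈ C → T u₁ = x₁ → u₂ ∈ C → T u₂ = x₂ →
      α * (J x₁ (x₁ - x₂) - J x₂ (x₁ - x₂)) ≤
        ((J u₁ - J x₁) (x₁ - x₂)) - ((J u₂ - J x₂) (x₁ - x₂)) := by
  intro x₁ x₂ u₁ u₂ h₁ e₁ h₂ e₂
  have h := hT u₁ h₁ u₂ h₂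
  rw [e₁, e₂] at h
  simp only [Pi.sub_apply, ContinuousLinearMap.sub_apply]
  linarith
end
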